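/- Let b,ℓ ≥ 1 be integers and let x, z ∈ {0,…,s−1}^ℓ be such that z_k − x_k is even for every coordinate k. Then every walk from v_{0,x} to v_{2ℓ,z} in H_{b,ℓ} that uses exactly 2ℓ edges has weighted length at least 2ℓ·A + (1/2)·∑_{k=1}^{ℓ} (z_k − x_k)², and exactly one such walk attains this value, namely the walk whose step from level i to level i+1 changes coordinate c(i) by exactly (z_{c(i)} − x_{c(i)})/2 (in particular this walk passes through v_{ℓ,(x+z)/2}). -/

import Mathlib

/-- The vertex set of the graph `H_{b,ℓ}`: levels `0,…,2ℓ`, each a copy of `{0,…,2^b-1}^ℓ`. -/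
abbrev HVert (b ℓ : ℕ) := Fin (2 * ℓ + 1) × (Fin ℓ → Fin (2 ^ b))

/-- The (0-indexed) coordinate `c(i)` that may change on a step from level `i` to `i+1`. -/
def cidx (ℓ i : ℕ) : ℕ := if i < ℓ then i else 2 * ℓ - 1 - i

/-- `u` is one level below `v` and their coordinate vectors agree outside coordinate
`c(level of u)`. -/
def HStep {b ℓ : ℕ} (u v : HVert b ℓ) : Prop :=
  (u.1 : ℕ) + 1 = (v.1 : ℕ) ∧ ∀ k : Fin ℓ, (k : ℕ) ≠ cidx ℓ (u.1 : ℕ) → u.2 k = v.2 k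

/-- The graph `H_{b,ℓ}`. -/
def HGraph (b ℓ : ℕ) : SimpleGraph (HVert b ℓ) where
  Adj u v := HStep u v ∨ HStep v u
  symm := ⟨fun _ _ h => h.symm⟩
  loopless := by
    constructor
    intro u h
    rcases h with h | h <;> exact absurd h.1 (by omega)

/-- The weight of an edge of `H_{b,ℓ}`: `A + (difference at the changing coordinate)²`,
where `A = 3ℓs²`, `s = 2^b`.  (For adjacent vertices all other coordinates agree, so the
sum below has a single nonzero term.) -/
def HWeight {b ℓ : ℕ} (u v : HVert b ℓ) : ℕ :=
  3 * ℓ * (2 ^ b) ^ 2 + ∑ k : Fin ℓ, (((u.2 k : ℤ) - ((v.2 k : ℕ) : ℤ)).natAbs) ^ 2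

/-- The weighted length of a walk in `H_{b,ℓ}`: the sum of the weights of its edges. -/
def hwlen {b ℓ : ℕ} {u v : HVert b ℓ} (p : (HGraph b ℓ).Walk u v) : ℕ :=
  (p.darts.map (fun d => HWeight d.toProd.1 d.toProd.2)).sum

/-- The weighted distance in `H_{b,ℓ}`: the minimum weighted length of a walk. -/
noncomputable def hwdist (b ℓ : ℕ) (u v : HVert b ℓ) : ℕ :=
  sInf {L : ℕ | ∃ p : (HGraph b ℓ).Walk u v, hwlen p = L}

/-- The coordinatewise midpoint `(x+z)/2`. -/
def midVec {b ℓ : ℕ} (x z : Fin ℓ → Fin (2 ^ b)) : Fin ℓ → Fin (2 ^ b) :=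
  fun k => ⟨((x k : ℕ) + (z k : ℕ)) / 2, by
    have hx := (x k).isLt
    have hz := (z k).isLt
    omega⟩

/-- The position, at level `i`, of the canonical walk from `v_{0,x}` to `v_{2ℓ,z}` that at
every step from level `i` to level `i+1` changes coordinate `c(i)` by exactly
`(z_{c(i)} - x_{c(i)})/2`: coordinates already treated carry the midpoint value. -/
def posVec {b ℓ : ℕ} (x z : Fin ℓ → Fin (2 ^ b)) (i : Fin (2 * ℓ + 1)) :
    Fin ℓ → Fin (2 ^ b) :=
  fun k => if (k : ℕ) < min (i : ℕ) (2 * ℓ - (i : ℕ)) then midVec x z k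
    else if (i : ℕ) ≤ ℓ then x k else z k

/-!
A walk with `2ℓ` edges from level `0` to level `2ℓ` climbs one level per step, so coordinate `k`
moves only at the two steps `i` with `c(i) = k`: from `x_k` to a plateau value `m_k`, then to
`z_k`. Its weighted length is therefore
`2ℓA + ∑ ((x_k - m_k)² + (m_k - z_k)²) = 2ℓA + ½ ∑ (z_k - x_k)² + 2 ∑ (m_k - (x_k + z_k)/2)²`,
and the walk is determined by `m`. The minimum is attained exactly when `m` is the midpoint,
which is a lattice point because `z - x` is even.
-/

open SimpleGraph Finset

lemma sq_sub_add_sq_sub_eq (a m c : ℝ) :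
    (a - m) ^ 2 + (m - c) ^ 2 = 1 / 2 * (c - a) ^ 2 + 2 * (m - (a + c) / 2) ^ 2 := by
  ring

namespace SimpleGraph.Walk

variable {V : Type*} {G : SimpleGraph V} {u v : V}

lemma sum_darts_map_eq_sum_range_getVert {M : Type*} [AddCommMonoid M] (f : V → V → M)
    (p : G.Walk u v) :
    (p.darts.map fun d => f d.toProd.1 d.toProd.2).sum =
      ∑ t ∈ range p.length, f (p.getVert t) (p.getVert (t + 1)) := by
  induction p with
  | nil => simp
  | cons h q ih =>
    rw [length_cons, sum_range_succ', add_comm]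
    simp only [darts_cons, List.map_cons, List.sum_cons, ih, getVert_cons_succ, getVert_zero]

lemma map_getVert_le_add {g : V → ℕ} (hg : ∀ a b, G.Adj a b → g b ≤ g a + 1) (p : G.Walk u v)
    {s t : ℕ} (hst : s ≤ t) : g (p.getVert t) ≤ g (p.getVert s) + (t - s) := by
  induction t, hst using Nat.le_induction with
  | base => simp
  | succ t hst ih =>
    rcases lt_or_ge t p.length with ht | ht
    · have := hg _ _ (p.adj_getVert_succ ht)
      omega
    · rw [p.getVert_of_length_le ht] at ih
      rw [p.getVert_of_length_le (by omega : p.length ≤ t + 1)]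
      omega

lemma map_getVert_eq_add {g : V → ℕ} (hg : ∀ a b, G.Adj a b → g b ≤ g a + 1) (p : G.Walk u v)
    (hp : g v = g u + p.length) {t : ℕ} (ht : t ≤ p.length) : g (p.getVert t) = g u + t := by
  have h₁ := p.map_getVert_le_add hg (Nat.zero_le t)
  have h₂ := p.map_getVert_le_add hg ht
  rw [getVert_zero] at h₁
  rw [getVert_length] at h₂
  omega

lemma exists_getVert_eq_of_adj {n : ℕ} (f : Fin (n + 1) → V)
    (hf : ∀ i : Fin n, G.Adj (f i.castSucc) (f i.succ)) (hu : f 0 = u) (hv : f (Fin.last n) = v) :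
    ∃ p : G.Walk u v, p.length = n ∧ ∀ i : Fin (n + 1), p.getVert i = f i := by
  have hne : List.ofFn f ≠ [] := List.ne_nil_of_length_pos (by simp)
  have hchain : (List.ofFn f).IsChain G.Adj :=
    List.isChain_ofFn.mpr fun i hi => hf ⟨i, by omega⟩
  refine ⟨(ofSupport _ hne hchain).copy (by rw [List.head_ofFn]; exact hu)
    (by rw [List.getLast_ofFn]; exact hv), by simp, fun i => ?_⟩
  rw [getVert_copy, getVert_eq_support_getElem _ (by simp; omega)]
  simp only [support_ofSupport, List.getElem_ofFn]

end SimpleGraph.Walk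

section HGraph

variable {b ℓ : ℕ}

lemma HGraph.fst_le_of_adj {u v : HVert b ℓ} (h : (HGraph b ℓ).Adj u v) :
    (v.1 : ℕ) ≤ u.1 + 1 := by
  rcases h with h | h <;> have := h.1 <;> omega

lemma HWeight_cast (u v : HVert b ℓ) :
    (HWeight u v : ℝ) =
      3 * ℓ * (2 ^ b) ^ 2 + ∑ k : Fin ℓ, (((u.2 k : ℕ) : ℝ) - ((v.2 k : ℕ) : ℝ)) ^ 2 := by
  simp [HWeight, Nat.cast_natAbs]

/-- Coordinate `k` changes only at steps `k` and `2ℓ - 1 - k`; in between it holds `m k`. -/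
def stagedVec (x m z : Fin ℓ → Fin (2 ^ b)) (t : ℕ) : Fin ℓ → Fin (2 ^ b) :=
  fun k => if t ≤ k then x k else if t + k < 2 * ℓ then m k else z k

lemma sum_range_sq_sub_stagedVec (x m z : Fin ℓ → Fin (2 ^ b)) (k : Fin ℓ) :
    ∑ t ∈ range (2 * ℓ),
        (((stagedVec x m z t k : ℕ) : ℝ) - ((stagedVec x m z (t + 1) k : ℕ) : ℝ)) ^ 2 =
      (((x k : ℕ) : ℝ) - ((m k : ℕ) : ℝ)) ^ 2 + (((m k : ℕ) : ℝ) - ((z k : ℕ) : ℝ)) ^ 2 := by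
  have hk := k.isLt
  rw [sum_eq_add_of_mem (k : ℕ) (2 * ℓ - 1 - k) (by simp; omega) (by simp; omega) (by omega)]
  · simp only [stagedVec]
    rw [if_pos le_rfl, if_neg (by omega), if_pos (by omega), if_neg (by omega), if_pos (by omega),
      show 2 * ℓ - 1 - k + 1 = 2 * ℓ - k by omega, if_neg (by omega), if_neg (by omega)]
  · intro t ht hne
    simp only [mem_range] at ht
    simp only [stagedVec]
    split_ifs <;> first | omega | simp

variable {x z : Fin ℓ → Fin (2 ^ b)}
  (p : (HGraph b ℓ).Walk (⟨0, Nat.succ_pos _⟩, x) (⟨2 * ℓ, Nat.lt_succ_self _⟩, z))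

def plateauVec : Fin ℓ → Fin (2 ^ b) := fun k => (p.getVert (k + 1)).2 k

variable {p} (hp : p.length = 2 * ℓ)
include hp

lemma fst_getVert {t : ℕ} (ht : t ≤ 2 * ℓ) : ((p.getVert t).1 : ℕ) = t := by
  simpa using p.map_getVert_eq_add (g := fun v => (v.1 : ℕ)) (fun _ _ => HGraph.fst_le_of_adj)
    (by simpa using hp.symm) (t := t) (by omega)

lemma hStep_getVert {t : ℕ} (ht : t < 2 * ℓ) : HStep (p.getVert t) (p.getVert (t + 1)) := by
  rcases p.adj_getVert_succ (by omega : t < p.length) with h | h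
  · exact h
  · have := h.1
    rw [fst_getVert hp (by omega), fst_getVert hp (by omega)] at this
    omega

lemma snd_getVert {t : ℕ} (ht : t ≤ 2 * ℓ) :
    (p.getVert t).2 = stagedVec x (plateauVec p) z t := by
  funext k
  have hk := k.isLt
  have hconst : ∀ a c, a ≤ c → c ≤ 2 * ℓ → (∀ s, a ≤ s → s < c → (k : ℕ) ≠ cidx ℓ s) →
      (p.getVert a).2 k = (p.getVert c).2 k := by
    intro a c hac hc hfree
    induction c, hac using Nat.le_induction with
    | base => rfl
    | succ c hac ih =>
      rw [ih (by omega) fun s h₁ h₂ => hfree s h₁ (by omega)]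
      have hs := hStep_getVert hp (t := c) (by omega)
      exact hs.2 k (by rw [fst_getVert hp (by omega)]; exact hfree c hac (by omega))
  simp only [stagedVec]
  split_ifs with h₁ h₂
  · rw [← hconst 0 t (by omega) ht fun s _ _ => by unfold cidx; split_ifs <;> omega,
      Walk.getVert_zero]
  · exact (hconst (k + 1) t (by omega) ht fun s _ _ => by unfold cidx; split_ifs <;> omega).symm
  · have hend := p.getVert_length
    rw [hp] at hend
    rw [hconst t (2 * ℓ) (by omega) le_rfl fun s _ _ => by unfold cidx; split_ifs <;> omega, hend]

lemma hwlen_eq :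
    (hwlen p : ℝ) = ((2 * ℓ * (3 * ℓ * (2 ^ b) ^ 2) : ℕ) : ℝ) +
      1 / 2 * ∑ k : Fin ℓ, (((z k : ℕ) : ℝ) - ((x k : ℕ) : ℝ)) ^ 2 +
      2 * ∑ k : Fin ℓ,
        (((plateauVec p k : ℕ) : ℝ) - (((x k : ℕ) : ℝ) + ((z k : ℕ) : ℝ)) / 2) ^ 2 := by
  have hstep : ∀ t ∈ range (2 * ℓ), (HWeight (p.getVert t) (p.getVert (t + 1)) : ℝ) =
      3 * ℓ * (2 ^ b) ^ 2 + ∑ k : Fin ℓ, (((stagedVec x (plateauVec p) z t k : ℕ) : ℝ) -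
        ((stagedVec x (plateauVec p) z (t + 1) k : ℕ) : ℝ)) ^ 2 := by
    intro t ht
    rw [mem_range] at ht
    rw [HWeight_cast, snd_getVert hp ht.le, snd_getVert hp ht]
  rw [hwlen, Walk.sum_darts_map_eq_sum_range_getVert, hp, Nat.cast_sum, sum_congr rfl hstep,
    sum_add_distrib, sum_const, card_range, sum_comm]
  simp only [sum_range_sq_sub_stagedVec, sq_sub_add_sq_sub_eq]
  rw [sum_add_distrib, ← mul_sum, ← mul_sum]
  push_cast
  ring

lemma eq_of_plateauVec_eq
    {q : (HGraph b ℓ).Walk (⟨0, Nat.succ_pos _⟩, x) (⟨2 * ℓ, Nat.lt_succ_self _⟩, z)}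
    (hq : q.length = 2 * ℓ) (h : plateauVec p = plateauVec q) : p = q :=
  Walk.ext_getVert_le_length (hp.trans hq.symm) fun t ht => by
    rw [hp] at ht
    exact Prod.ext (Fin.ext ((fst_getVert hp ht).trans (fst_getVert hq ht).symm))
      (by rw [snd_getVert hp ht, snd_getVert hq ht, h])

end HGraph

section CanonicalWalk

variable {b ℓ : ℕ} {x z : Fin ℓ → Fin (2 ^ b)}

lemma cast_midVec (heven : ∀ k : Fin ℓ, (2 : ℤ) ∣ ((z k : ℤ) - (x k : ℤ))) (k : Fin ℓ) :
    ((midVec x z k : ℕ) : ℝ) = (((x k : ℕ) : ℝ) + ((z k : ℕ) : ℝ)) / 2 := by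
  obtain ⟨c, hc⟩ := heven k
  have h : 2 * (midVec x z k : ℕ) = x k + z k := by
    simp only [midVec]
    omega
  rw [eq_div_iff two_ne_zero, mul_comm]
  exact_mod_cast h

lemma sum_sq_sub_midpoint_eq_zero_iff (heven : ∀ k : Fin ℓ, (2 : ℤ) ∣ ((z k : ℤ) - (x k : ℤ)))
    (m : Fin ℓ → Fin (2 ^ b)) :
    ∑ k : Fin ℓ, (((m k : ℕ) : ℝ) - (((x k : ℕ) : ℝ) + ((z k : ℕ) : ℝ)) / 2) ^ 2 = 0 ↔
      m = midVec x z := by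
  simp only [sum_eq_zero_iff_of_nonneg fun _ _ => sq_nonneg _, mem_univ, true_imp_iff,
    sq_eq_zero_iff, sub_eq_zero, ← cast_midVec heven, Nat.cast_inj, Fin.val_inj, funext_iff]

lemma posVec_eq_midVec {i : Fin (2 * ℓ + 1)} (hi : (i : ℕ) = ℓ) : posVec x z i = midVec x z := by
  funext k
  have hk := k.isLt
  simp only [posVec]
  rw [if_pos (by omega)]

lemma hStep_posVec (i : Fin (2 * ℓ)) :
    HStep (i.castSucc, posVec x z i.castSucc) (i.succ, posVec x z i.succ) := by
  refine ⟨by simp, fun k hk => ?_⟩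
  have hi := i.isLt
  have hk' := k.isLt
  simp only [cidx, Fin.val_castSucc] at hk
  simp only [posVec, Fin.val_castSucc, Fin.val_succ]
  split_ifs at hk ⊢ <;> first | rfl | omega

lemma exists_walk_getVert_eq_posVec :
    ∃ p : (HGraph b ℓ).Walk (⟨0, Nat.succ_pos _⟩, x) (⟨2 * ℓ, Nat.lt_succ_self _⟩, z),
      p.length = 2 * ℓ ∧ ∀ i : Fin (2 * ℓ + 1), p.getVert i = (i, posVec x z i) :=
  Walk.exists_getVert_eq_of_adj (fun i => (i, posVec x z i)) (fun i => Or.inl (hStep_posVec i))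
    (Prod.ext rfl (funext fun k => by simp [posVec]))
    (Prod.ext rfl (funext fun k => by
      have hk := k.isLt
      simp only [posVec, Fin.val_last]
      rw [if_neg (by omega), if_neg (by omega)]))

lemma plateauVec_eq_midVec
    {p : (HGraph b ℓ).Walk (⟨0, Nat.succ_pos _⟩, x) (⟨2 * ℓ, Nat.lt_succ_self _⟩, z)}
    (hgetVert : ∀ i : Fin (2 * ℓ + 1), p.getVert i = (i, posVec x z i)) :
    plateauVec p = midVec x z := by
  funext k
  have hk := k.isLt
  simp only [plateauVec]
  rw [hgetVert ⟨k + 1, by omega⟩]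
  simp only [posVec]
  rw [if_pos (by simp; omega)]

end CanonicalWalk

/-- Every walk from `v_{0,x}` to `v_{2ℓ,z}` on exactly `2ℓ` edges has weighted length at
least `2ℓ·A + (1/2)·∑ (z_k - x_k)²`, and exactly one such walk attains this value: the walk
whose step from level `i` to `i+1` changes coordinate `c(i)` by exactly
`(z_{c(i)} - x_{c(i)})/2` (hence visiting `posVec x z i` at each level `i`; in particular it
passes through `v_{ℓ,(x+z)/2}`). -/
theorem min_length_two_ell_walk (b ℓ : ℕ)
    (x z : Fin ℓ → Fin (2 ^ b))
    (heven : ∀ k : Fin ℓ, (2 : ℤ) ∣ ((z k : ℤ) - (x k : ℤ))) :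
    (∀ p : (HGraph b ℓ).Walk (⟨0, by omega⟩, x) (⟨2 * ℓ, by omega⟩, z),
        p.length = 2 * ℓ →
        ((2 * ℓ * (3 * ℓ * (2 ^ b) ^ 2) : ℕ) : ℝ) +
            (1 / 2) * ∑ k : Fin ℓ, (((z k : ℕ) : ℝ) - ((x k : ℕ) : ℝ)) ^ 2 ≤ (hwlen p : ℝ)) ∧
      ∃ p : (HGraph b ℓ).Walk (⟨0, by omega⟩, x) (⟨2 * ℓ, by omega⟩, z),
        (p.length = 2 * ℓ ∧
            (hwlen p : ℝ) = ((2 * ℓ * (3 * ℓ * (2 ^ b) ^ 2) : ℕ) : ℝ) +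
              (1 / 2) * ∑ k : Fin ℓ, (((z k : ℕ) : ℝ) - ((x k : ℕ) : ℝ)) ^ 2) ∧
          (∀ i : Fin (2 * ℓ + 1), (i, posVec x z i) ∈ p.support) ∧
          ((⟨ℓ, by omega⟩ : Fin (2 * ℓ + 1)), midVec x z) ∈ p.support ∧
          ∀ q : (HGraph b ℓ).Walk (⟨0, by omega⟩, x) (⟨2 * ℓ, by omega⟩, z),
            q.length = 2 * ℓ →
            (hwlen q : ℝ) = ((2 * ℓ * (3 * ℓ * (2 ^ b) ^ 2) : ℕ) : ℝ) +
              (1 / 2) * ∑ k : Fin ℓ, (((z k : ℕ) : ℝ) - ((x k : ℕ) : ℝ)) ^ 2 →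
            q = p := by
  obtain ⟨p₀, hp₀, hgetVert⟩ := exists_walk_getVert_eq_posVec (x := x) (z := z)
  have hplateau₀ := plateauVec_eq_midVec hgetVert
  refine ⟨fun p hp => ?_, p₀, ⟨hp₀, ?_⟩, fun i => ?_, ?_, fun q hq hlen => ?_⟩
  · rw [hwlen_eq hp]
    have := sum_nonneg fun k (_ : k ∈ univ) =>
      sq_nonneg (((plateauVec p k : ℕ) : ℝ) - (((x k : ℕ) : ℝ) + ((z k : ℕ) : ℝ)) / 2)
    linarith
  · rw [hwlen_eq hp₀, (sum_sq_sub_midpoint_eq_zero_iff heven _).mpr hplateau₀]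
    ring
  · exact hgetVert i ▸ p₀.getVert_mem_support i
  · rw [← posVec_eq_midVec (i := ⟨ℓ, by omega⟩) rfl, ← hgetVert]
    exact p₀.getVert_mem_support _
  · rw [hwlen_eq hq] at hlen
    refine eq_of_plateauVec_eq hq hp₀ ?_
    rw [hplateau₀, ← sum_sq_sub_midpoint_eq_zero_iff heven]
    linarith
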